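/- arXiv:1306.6367 — 2 statements merged into one kernel-verified Lean document; each statement's English description precedes it below -/
import Mathlib

section
/- Let n ≥ 2, let U ⊆ ℝ^{n+1} be open, and let y_1,…,y_{n−1}, z : U → ℝ be smooth functions satisfying equations (E1), (E2), (E3) for all 1 ≤ a,b ≤ n−1 at every point of U. Then for every 1 ≤ k ≤ n−1 and every p ∈ U, the vector V_k(p) = dF_p(Ṽ_k(p)) is ω_0-orthogonal to the whole tangent space of the graph: ω_0(V_k(p), dF_p(u)) = 0 for all u ∈ ℝ^{n+1}. -/
open scoped BigOperators

/-- Partial derivative of `f` in the `i`-th coordinate direction. -/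
noncomputable def pd {m : ℕ} (i : Fin m) (f : (Fin m → ℝ) → ℝ) (p : Fin m → ℝ) : ℝ :=
  fderiv ℝ f p (Pi.single i 1)

/-- Index of the coordinate `x_a` (for `1 ≤ a ≤ n-1`) in `ℝ^{n+1}` with
coordinates `(x_1, …, x_n, y_n)`. -/
def xIdx {n : ℕ} (a : Fin (n - 1)) : Fin (n + 1) := Fin.castLE (by omega) a

/-- Index of the coordinate `x_n`. -/
def xnIdx (n : ℕ) : Fin (n + 1) := ⟨n - 1, by omega⟩

/-- Index of the coordinate `y_n`. -/
def ynIdx (n : ℕ) : Fin (n + 1) := ⟨n, by omega⟩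

/-- Equation (E0). -/
noncomputable def E0 {n : ℕ} (y : Fin (n - 1) → (Fin (n + 1) → ℝ) → ℝ)
    (z : (Fin (n + 1) → ℝ) → ℝ) (a b c : Fin (n - 1)) (p : Fin (n + 1) → ℝ) : ℝ :=
  (pd (xIdx a) z p - y a p) * (pd (xIdx c) (y b) p - pd (xIdx b) (y c) p)
    - (pd (xIdx b) z p - y b p) * (pd (xIdx c) (y a) p - pd (xIdx a) (y c) p)
    + (pd (xIdx c) z p - y c p) * (pd (xIdx b) (y a) p - pd (xIdx a) (y b) p)

/-- Equation (E1). -/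
noncomputable def E1 {n : ℕ} (y : Fin (n - 1) → (Fin (n + 1) → ℝ) → ℝ)
    (z : (Fin (n + 1) → ℝ) → ℝ) (a b : Fin (n - 1)) (p : Fin (n + 1) → ℝ) : ℝ :=
  (pd (xIdx a) z p - y a p) * pd (xnIdx n) (y b) p
    - (pd (xIdx b) z p - y b p) * pd (xnIdx n) (y a) p
    + (pd (xnIdx n) z p - p (ynIdx n)) * (pd (xIdx b) (y a) p - pd (xIdx a) (y b) p)

/-- Equation (E2). -/
noncomputable def E2 {n : ℕ} (y : Fin (n - 1) → (Fin (n + 1) → ℝ) → ℝ)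
    (z : (Fin (n + 1) → ℝ) → ℝ) (a b : Fin (n - 1)) (p : Fin (n + 1) → ℝ) : ℝ :=
  (pd (xIdx a) z p - y a p) * pd (ynIdx n) (y b) p
    - (pd (xIdx b) z p - y b p) * pd (ynIdx n) (y a) p
    + pd (ynIdx n) z p * (pd (xIdx b) (y a) p - pd (xIdx a) (y b) p)

/-- Equation (E3). -/
noncomputable def E3 {n : ℕ} (y : Fin (n - 1) → (Fin (n + 1) → ℝ) → ℝ)
    (z : (Fin (n + 1) → ℝ) → ℝ) (a : Fin (n - 1)) (p : Fin (n + 1) → ℝ) : ℝ :=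
  pd (xIdx a) z p - (pd (xnIdx n) z p - p (ynIdx n)) * pd (ynIdx n) (y a) p
    + pd (ynIdx n) z p * pd (xnIdx n) (y a) p - y a p

/-- The function `Λ_{a,b}`. -/
noncomputable def Lam {n : ℕ} (y : Fin (n - 1) → (Fin (n + 1) → ℝ) → ℝ)
    (a b : Fin (n - 1)) (p : Fin (n + 1) → ℝ) : ℝ :=
  pd (ynIdx n) (y a) p * pd (xnIdx n) (y b) p - pd (ynIdx n) (y b) p * pd (xnIdx n) (y a) p
    + pd (xIdx b) (y a) p - pd (xIdx a) (y b) p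

/-- The graph map `F : ℝ^{n+1} → ℝ^{2n+1}`,
`F(x_1,…,x_n,y_n) = (x_1,…,x_n,y_1,…,y_{n-1},y_n,z)`. -/
noncomputable def graphMap (n : ℕ) (y : Fin (n - 1) → (Fin (n + 1) → ℝ) → ℝ)
    (z : (Fin (n + 1) → ℝ) → ℝ) (p : Fin (n + 1) → ℝ) : Fin (2 * n + 1) → ℝ := fun i =>
  if h1 : (i : ℕ) < n then p ⟨i, by omega⟩
  else if h2 : (i : ℕ) < 2 * n - 1 then y ⟨(i : ℕ) - n, by omega⟩ p
  else if h3 : (i : ℕ) = 2 * n - 1 then p (ynIdx n)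
  else z p

/-- The standard contact form `α = dz - Σ y_i dx_i` on `ℝ^{2n+1}` with coordinates
`(x_1,…,x_n,y_1,…,y_n,z)`, evaluated at the point `q` on the vector `v`. -/
noncomputable def contactForm (n : ℕ) (q v : Fin (2 * n + 1) → ℝ) : ℝ :=
  v ⟨2 * n, by omega⟩
    - ∑ i : Fin n, q ⟨n + i, by have := i.isLt; omega⟩ * v ⟨i, by have := i.isLt; omega⟩

/-- The standard symplectic form `ω₀ = Σ dx_i ∧ dy_i = dα` on `ℝ^{2n+1}`. -/
noncomputable def omega0 (n : ℕ) (u v : Fin (2 * n + 1) → ℝ) : ℝ :=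
  ∑ i : Fin n, (u ⟨i, by have := i.isLt; omega⟩ * v ⟨n + i, by have := i.isLt; omega⟩
    - u ⟨n + i, by have := i.isLt; omega⟩ * v ⟨i, by have := i.isLt; omega⟩)

/-- The 3-form `α ∧ ω₀` evaluated at the point `q` on the vectors `u, v, w`. -/
noncomputable def awedge (n : ℕ) (q u v w : Fin (2 * n + 1) → ℝ) : ℝ :=
  contactForm n q u * omega0 n v w - contactForm n q v * omega0 n u w
    + contactForm n q w * omega0 n u v

/-- The vector field `Ṽ_k = ∂_{x_k} - (∂y_k/∂y_n) ∂_{x_n} + (∂y_k/∂x_n) ∂_{y_n}` on `ℝ^{n+1}`. -/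
noncomputable def Vt (n : ℕ) (y : Fin (n - 1) → (Fin (n + 1) → ℝ) → ℝ) (k : Fin (n - 1))
    (p : Fin (n + 1) → ℝ) : Fin (n + 1) → ℝ :=
  (Pi.single (xIdx k) 1 : Fin (n + 1) → ℝ)
    - pd (ynIdx n) (y k) p • (Pi.single (xnIdx n) 1 : Fin (n + 1) → ℝ)
    + pd (xnIdx n) (y k) p • (Pi.single (ynIdx n) 1 : Fin (n + 1) → ℝ)

/-! Combining (E1) and (E2) with (E3) gives `(∂z/∂x_n - y_n) Λ_{ab} = 0` and `(∂z/∂y_n) Λ_{ab} = 0`.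
If `Λ_{ab}` were nonzero at a point, then near it `∂z/∂x_n = y_n` and `∂z/∂y_n = 0`, so the mixed
second partials `∂²z/∂y_n∂x_n = 1` and `∂²z/∂x_n∂y_n = 0` would differ; hence `Λ` vanishes on `U`.
On the other hand, since `dy_a(Ṽ_k) = ∂y_k/∂x_a - Λ_{ka}`, one has
`ω₀(V_k, dF u) = Σ_a Λ_{ka} u_{x_a}` identically. -/

open scoped Topology

section PartialDerivatives

variable {m : ℕ} {f g : (Fin m → ℝ) → ℝ} {p : Fin m → ℝ}

lemma pd_congr_of_eventuallyEq (h : f =ᶠ[𝓝 p] g) (i : Fin m) : pd i f p = pd i g p := by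
  rw [pd, pd, h.fderiv_eq]

lemma pd_apply_self (i : Fin m) : pd i (fun q => q i) p = 1 := by
  simp [pd, fderiv_apply]

lemma pd_const (i : Fin m) (c : ℝ) : pd i (fun _ => c) p = 0 := by
  simp [pd]

lemma pd_pd_comm (hf : ContDiffAt ℝ 2 f p) (i j : Fin m) :
    pd i (pd j f) p = pd j (pd i f) p := by
  have hd : DifferentiableAt ℝ (fderiv ℝ f) p :=
    (hf.fderiv_right (m := 1) (by norm_num)).differentiableAt one_ne_zero
  have fderiv_pd : ∀ k : Fin m, ∀ w, fderiv ℝ (pd k f) p w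
      = fderiv ℝ (fderiv ℝ f) p w (Pi.single k 1) := fun k w => by
    show fderiv ℝ (fun q => fderiv ℝ f q (Pi.single k 1)) p w = _
    simp [fderiv_clm_apply hd (differentiableAt_const _)]
  rw [pd, pd, fderiv_pd, fderiv_pd]
  exact hf.isSymmSndFDerivAt (by simp) _ _

lemma not_eventually_pd_eq_apply_and_pd_eq_zero (hf : ContDiffAt ℝ 2 f p) (i j : Fin m) :
    ¬ ∀ᶠ q in 𝓝 p, pd i f q = q j ∧ pd j f q = 0 := by
  intro h
  have h1 : pd j (pd i f) p = 1 :=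
    (pd_congr_of_eventuallyEq (h.mono fun _ hq => hq.1) j).trans (pd_apply_self j)
  have h0 : pd i (pd j f) p = 0 :=
    (pd_congr_of_eventuallyEq (h.mono fun _ hq => hq.2) i).trans (pd_const i 0)
  exact one_ne_zero (h1.symm.trans ((pd_pd_comm hf i j).symm.trans h0))

lemma ContDiffOn.continuousOn_pd {U : Set (Fin m → ℝ)} (hf : ContDiffOn ℝ 1 f U) (hU : IsOpen U)
    (i : Fin m) : ContinuousOn (pd i f) U :=
  (hf.continuousOn_fderiv_of_isOpen hU le_rfl).clm_apply continuousOn_const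

lemma fderiv_apply_eq_sum_pd_mul (f : (Fin m → ℝ) → ℝ) (p v : Fin m → ℝ) :
    fderiv ℝ f p v = ∑ j, pd j f p * v j := by
  conv_lhs => rw [pi_eq_sum_univ' v]
  simp [pd, mul_comm]

end PartialDerivatives

section Foliation

variable {n : ℕ} {y : Fin (n - 1) → (Fin (n + 1) → ℝ) → ℝ} {z : (Fin (n + 1) → ℝ) → ℝ}

lemma sub_mul_Lam (a b : Fin (n - 1)) (p : Fin (n + 1) → ℝ) :
    (pd (xnIdx n) z p - p (ynIdx n)) * Lam y a b p
      = E1 y z a b p - pd (xnIdx n) (y b) p * E3 y z a p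
        + pd (xnIdx n) (y a) p * E3 y z b p := by
  simp only [E1, E3, Lam]
  ring

lemma pd_ynIdx_mul_Lam (a b : Fin (n - 1)) (p : Fin (n + 1) → ℝ) :
    pd (ynIdx n) z p * Lam y a b p
      = E2 y z a b p - pd (ynIdx n) (y b) p * E3 y z a p
        + pd (ynIdx n) (y a) p * E3 y z b p := by
  simp only [E2, E3, Lam]
  ring

lemma continuousOn_Lam {U : Set (Fin (n + 1) → ℝ)} (hU : IsOpen U)
    (hy : ∀ a, ContDiffOn ℝ 1 (y a) U) (a b : Fin (n - 1)) : ContinuousOn (Lam y a b) U := by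
  have hpd := fun c i => (hy c).continuousOn_pd hU i
  unfold Lam
  fun_prop

theorem Lam_eq_zero {U : Set (Fin (n + 1) → ℝ)} (hU : IsOpen U)
    (hy : ∀ a, ContDiffOn ℝ 1 (y a) U) (hz : ContDiffOn ℝ 2 z U)
    (hE1 : ∀ a b, ∀ p ∈ U, E1 y z a b p = 0)
    (hE2 : ∀ a b, ∀ p ∈ U, E2 y z a b p = 0)
    (hE3 : ∀ a, ∀ p ∈ U, E3 y z a p = 0)
    (a b : Fin (n - 1)) {p : Fin (n + 1) → ℝ} (hp : p ∈ U) : Lam y a b p = 0 := by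
  by_contra hΛ
  have hW : U ∩ Lam y a b ⁻¹' {0}ᶜ ∈ 𝓝 p :=
    ((continuousOn_Lam hU hy a b).isOpen_inter_preimage hU isOpen_compl_singleton).mem_nhds
      ⟨hp, hΛ⟩
  refine not_eventually_pd_eq_apply_and_pd_eq_zero (hz.contDiffAt (hU.mem_nhds hp))
    (xnIdx n) (ynIdx n) (Filter.mem_of_superset hW fun q ⟨hq, hΛq⟩ => ⟨?_, ?_⟩)
  · have := sub_mul_Lam (y := y) (z := z) a b q
    rw [hE1 a b q hq, hE3 a q hq, hE3 b q hq] at this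
    simpa [sub_eq_zero, show Lam y a b q ≠ 0 from hΛq] using this
  · have := pd_ynIdx_mul_Lam (y := y) (z := z) a b q
    rw [hE2 a b q hq, hE3 a q hq, hE3 b q hq] at this
    simpa [show Lam y a b q ≠ 0 from hΛq] using this

end Foliation

section GraphMap

variable {n : ℕ}

lemma xIdx_ne_xnIdx (a : Fin (n - 1)) : xIdx a ≠ xnIdx n := by
  simp [xIdx, xnIdx, Fin.ext_iff]; omega

lemma xIdx_ne_ynIdx (a : Fin (n - 1)) : xIdx a ≠ ynIdx n := by
  simp [xIdx, ynIdx, Fin.ext_iff]; omega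

lemma xIdx_inj {a b : Fin (n - 1)} : xIdx a = xIdx b ↔ a = b := by
  simp [xIdx, Fin.ext_iff]

lemma xnIdx_ne_ynIdx (hn : 1 ≤ n) : xnIdx n ≠ ynIdx n := by
  simp [xnIdx, ynIdx, Fin.ext_iff]; omega

lemma omega0_graphMap (η : Fin (n - 1) → (Fin (n + 1) → ℝ) → ℝ) (ζ : (Fin (n + 1) → ℝ) → ℝ)
    (v w : Fin (n + 1) → ℝ) :
    omega0 n (graphMap n η ζ v) (graphMap n η ζ w)
      = ∑ a, (v (xIdx a) * η a w - η a v * w (xIdx a))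
        + (v (xnIdx n) * w (ynIdx n) - v (ynIdx n) * w (xnIdx n)) := by
  obtain _ | m := n
  · simp [omega0, xnIdx, ynIdx]
  rw [omega0, Fin.sum_univ_castSucc]
  congr 1
  · refine Finset.sum_congr rfl fun a _ => ?_
    have h₁ : ¬ m + 1 + (a : ℕ) ≤ m := by omega
    have h₂ : m + 1 + (a : ℕ) < 2 * (m + 1) - 1 := by omega
    simp [graphMap, h₁, h₂]
    rfl
  · have h : m + 1 + m = 2 * (m + 1) - 1 := by omega
    simp [graphMap, xnIdx, ynIdx, h]

lemma sum_eq_sum_xIdx_add_xnIdx_add_ynIdx {M : Type*} [AddCommMonoid M] (hn : 1 ≤ n)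
    (f : Fin (n + 1) → M) :
    ∑ j, f j = ∑ a : Fin (n - 1), f (xIdx a) + f (xnIdx n) + f (ynIdx n) := by
  obtain ⟨m, rfl⟩ : ∃ m, n = m + 1 := ⟨n - 1, by omega⟩
  rw [Fin.sum_univ_castSucc, Fin.sum_univ_castSucc]
  rfl

variable {y : Fin (n - 1) → (Fin (n + 1) → ℝ) → ℝ} {z : (Fin (n + 1) → ℝ) → ℝ}
  {p : Fin (n + 1) → ℝ}

lemma differentiableAt_and_fderiv_graphMap_apply
    (hy : ∀ a, DifferentiableAt ℝ (y a) p) (hz : DifferentiableAt ℝ z p) (i : Fin (2 * n + 1)) :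
    DifferentiableAt ℝ (fun q => graphMap n y z q i) p ∧ ∀ v,
      fderiv ℝ (fun q => graphMap n y z q i) p v
        = graphMap n (fun a => fderiv ℝ (y a) p) (fderiv ℝ z p) v i := by
  unfold graphMap
  split_ifs
  · exact ⟨by fun_prop, fun v => by simp [fderiv_apply]⟩
  · exact ⟨hy _, fun _ => rfl⟩
  · exact ⟨by fun_prop, fun v => by simp [fderiv_apply]⟩
  · exact ⟨hz, fun _ => rfl⟩

lemma fderiv_graphMap_apply (hy : ∀ a, DifferentiableAt ℝ (y a) p)
    (hz : DifferentiableAt ℝ z p) (v : Fin (n + 1) → ℝ) :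
    fderiv ℝ (graphMap n y z) p v = graphMap n (fun a => fderiv ℝ (y a) p) (fderiv ℝ z p) v := by
  ext i
  rw [show graphMap n y z = fun q i => graphMap n y z q i from rfl,
    fderiv_pi fun i => (differentiableAt_and_fderiv_graphMap_apply hy hz i).1]
  exact (differentiableAt_and_fderiv_graphMap_apply hy hz i).2 v

lemma Vt_apply_xIdx (k a : Fin (n - 1)) : Vt n y k p (xIdx a) = if a = k then 1 else 0 := by
  simp [Vt, Pi.single_apply, xIdx_ne_xnIdx, xIdx_ne_ynIdx, xIdx_inj]

lemma Vt_apply_xnIdx (k : Fin (n - 1)) : Vt n y k p (xnIdx n) = -pd (ynIdx n) (y k) p := by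
  simp [Vt, (xIdx_ne_xnIdx k).symm, xnIdx_ne_ynIdx (n := n) (by have := k.pos; omega)]

lemma Vt_apply_ynIdx (k : Fin (n - 1)) : Vt n y k p (ynIdx n) = pd (xnIdx n) (y k) p := by
  simp [Vt, (xIdx_ne_ynIdx k).symm, (xnIdx_ne_ynIdx (n := n) (by have := k.pos; omega)).symm]

lemma fderiv_apply_Vt (k b : Fin (n - 1)) :
    fderiv ℝ (y b) p (Vt n y k p) = pd (xIdx b) (y k) p - Lam y k b p := by
  simp only [Vt, map_add, map_sub, map_smul, smul_eq_mul, Lam, pd]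
  ring

theorem omega0_fderiv_graphMap_Vt (hy : ∀ a, DifferentiableAt ℝ (y a) p)
    (hz : DifferentiableAt ℝ z p) (k : Fin (n - 1)) (u : Fin (n + 1) → ℝ) :
    omega0 n (fderiv ℝ (graphMap n y z) p (Vt n y k p)) (fderiv ℝ (graphMap n y z) p u)
      = ∑ a, Lam y k a p * u (xIdx a) := by
  have hdyk : fderiv ℝ (y k) p u = ∑ a, pd (xIdx a) (y k) p * u (xIdx a)
      + pd (xnIdx n) (y k) p * u (xnIdx n) + pd (ynIdx n) (y k) p * u (ynIdx n) := by
    rw [fderiv_apply_eq_sum_pd_mul, sum_eq_sum_xIdx_add_xnIdx_add_ynIdx (by have := k.pos; omega)]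
  rw [fderiv_graphMap_apply hy hz, fderiv_graphMap_apply hy hz, omega0_graphMap]
  simp only [Vt_apply_xIdx, Vt_apply_xnIdx, Vt_apply_ynIdx, fderiv_apply_Vt, ite_mul, one_mul,
    zero_mul, Finset.sum_sub_distrib, Finset.sum_ite_eq', Finset.mem_univ, if_true, hdyk, sub_mul]
  ring

end GraphMap

theorem Vk_omega_orthogonal_general (n : ℕ) (U : Set (Fin (n + 1) → ℝ)) (hU : IsOpen U)
    (y : Fin (n - 1) → (Fin (n + 1) → ℝ) → ℝ) (z : (Fin (n + 1) → ℝ) → ℝ)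
    (hy : ∀ a, ContDiffOn ℝ (⊤ : ℕ∞) (y a) U) (hz : ContDiffOn ℝ (⊤ : ℕ∞) z U)
    (hE1 : ∀ a b, ∀ p ∈ U, E1 y z a b p = 0)
    (hE2 : ∀ a b, ∀ p ∈ U, E2 y z a b p = 0)
    (hE3 : ∀ a, ∀ p ∈ U, E3 y z a p = 0) :
    ∀ k : Fin (n - 1), ∀ p ∈ U, ∀ u : Fin (n + 1) → ℝ,
      omega0 n (fderiv ℝ (graphMap n y z) p (Vt n y k p))
        (fderiv ℝ (graphMap n y z) p u) = 0 := by
  intro k p hp u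
  have hdy (a : Fin (n - 1)) : DifferentiableAt ℝ (y a) p :=
    ((hy a).contDiffAt (hU.mem_nhds hp)).differentiableAt (by simp)
  have hdz : DifferentiableAt ℝ z p := (hz.contDiffAt (hU.mem_nhds hp)).differentiableAt (by simp)
  have hΛ (a : Fin (n - 1)) : Lam y k a p = 0 :=
    Lam_eq_zero hU (fun a => (hy a).of_le (WithTop.coe_le_coe.2 le_top))
      (hz.of_le (WithTop.coe_le_coe.2 le_top)) hE1 hE2 hE3 k a hp
  rw [omega0_fderiv_graphMap_Vt hdy hdz]
  simp only [hΛ, zero_mul, Finset.sum_const_zero]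

/-- If (E1), (E2), (E3) hold on `U`, then `V_k = dF(Ṽ_k)` is
`ω₀`-orthogonal to the whole tangent space of the graph. -/
theorem Vk_omega_orthogonal (n : ℕ) (hn : 2 ≤ n) (U : Set (Fin (n + 1) → ℝ)) (hU : IsOpen U)
    (y : Fin (n - 1) → (Fin (n + 1) → ℝ) → ℝ) (z : (Fin (n + 1) → ℝ) → ℝ)
    (hy : ∀ a, ContDiffOn ℝ (⊤ : ℕ∞) (y a) U) (hz : ContDiffOn ℝ (⊤ : ℕ∞) z U)
    (hE1 : ∀ a b, ∀ p ∈ U, E1 y z a b p = 0)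
    (hE2 : ∀ a b, ∀ p ∈ U, E2 y z a b p = 0)
    (hE3 : ∀ a, ∀ p ∈ U, E3 y z a p = 0) :
    ∀ k : Fin (n - 1), ∀ p ∈ U, ∀ u : Fin (n + 1) → ℝ,
      omega0 n (fderiv ℝ (graphMap n y z) p (Vt n y k p))
        (fderiv ℝ (graphMap n y z) p u) = 0 :=
  Vk_omega_orthogonal_general n U hU y z hy hz hE1 hE2 hE3
end

section
/- Let n ≥ 2, let U ⊆ ℝ^{n+1} be open with coordinates (x_1,…,x_n,y_n), and let y_1,…,y_{n−1} : U → ℝ be smooth. For 1 ≤ k ≤ n−1 let Ṽ_k = ∂_{x_k} − (∂y_k/∂y_n)∂_{x_n} + (∂y_k/∂x_n)∂_{y_n}. Then for all 1 ≤ k,l ≤ n−1 the Lie bracket satisfies [Ṽ_k, Ṽ_l] = (∂Λ_{k,l}/∂y_n)·∂_{x_n} − (∂Λ_{k,l}/∂x_n)·∂_{y_n}, where Λ_{k,l} = (∂y_k/∂y_n)(∂y_l/∂x_n) − (∂y_l/∂y_n)(∂y_k/∂x_n) + ∂y_k/∂x_l − ∂y_l/∂x_k. -/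
open scoped BigOperators

/-! Writing `X_h = (∂h/∂x_n) ∂_{y_n} - (∂h/∂y_n) ∂_{x_n}` for the Hamiltonian field of `h` in the
`(x_n, y_n)`-plane, `Ṽ_k = ∂_{x_k} + X_{y_k}`. For fields of the form `a + X_f`, `b + X_g` with
constant `a, b`, the product rule and the symmetry of the second derivatives of `f` and `g` give
`[a + X_f, b + X_g] = -X_Λ` with `Λ = ∂_w f ∂_u g - ∂_w g ∂_u f + ∂_b f - ∂_a g`. -/

section

variable {𝕜 : Type*} [NontriviallyNormedField 𝕜]
  {E : Type*} [NormedAddCommGroup E] [NormedSpace 𝕜 E]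
  {F : Type*} [NormedAddCommGroup F] [NormedSpace 𝕜 F]

theorem fderiv_fderiv_apply_const {f : E → F} {x : E} (hf : DifferentiableAt 𝕜 (fderiv 𝕜 f) x)
    (u v : E) : fderiv 𝕜 (fun y ↦ fderiv 𝕜 f y u) x v = fderiv 𝕜 (fderiv 𝕜 f) x v u := by
  rw [fderiv_clm_apply hf (differentiableAt_const u)]
  simp

end

namespace VectorField

variable {E : Type*} [NormedAddCommGroup E] [NormedSpace ℝ E]

noncomputable def hamiltonianField (u w : E) (f : E → ℝ) : E → E :=
  fun x ↦ fderiv ℝ f x u • w - fderiv ℝ f x w • u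

theorem fderiv_hamiltonianField_apply {f : E → ℝ} {x : E}
    (hf : DifferentiableAt ℝ (fderiv ℝ f) x) (u w v : E) :
    fderiv ℝ (hamiltonianField u w f) x v =
      fderiv ℝ (fderiv ℝ f) x v u • w - fderiv ℝ (fderiv ℝ f) x v w • u := by
  have hdir : ∀ u, DifferentiableAt ℝ (fun y ↦ fderiv ℝ f y u) x :=
    fun u ↦ hf.clm_apply (differentiableAt_const u)
  unfold hamiltonianField
  rw [(((hdir u).hasFDerivAt.smul_const w).fun_sub
    ((hdir w).hasFDerivAt.smul_const u)).fderiv]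
  simp [fderiv_fderiv_apply_const hf]

theorem lieBracket_const_add_hamiltonianField {f g : E → ℝ} {x : E}
    (hf : ContDiffAt ℝ 2 f x) (hg : ContDiffAt ℝ 2 g x) (a b u w : E) :
    lieBracket ℝ (fun y ↦ a + hamiltonianField u w f y) (fun y ↦ b + hamiltonianField u w g y) x =
      -hamiltonianField u w (fun y ↦ fderiv ℝ f y w * fderiv ℝ g y u
        - fderiv ℝ g y w * fderiv ℝ f y u + fderiv ℝ f y b - fderiv ℝ g y a) x := by
  have hDf : DifferentiableAt ℝ (fderiv ℝ f) x :=
    (hf.fderiv_right le_rfl).differentiableAt one_ne_zero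
  have hDg : DifferentiableAt ℝ (fderiv ℝ g) x :=
    (hg.fderiv_right le_rfl).differentiableAt one_ne_zero
  have hDfu : ∀ u, DifferentiableAt ℝ (fun y ↦ fderiv ℝ f y u) x :=
    fun u ↦ hDf.clm_apply (differentiableAt_const u)
  have hDgu : ∀ u, DifferentiableAt ℝ (fun y ↦ fderiv ℝ g y u) x :=
    fun u ↦ hDg.clm_apply (differentiableAt_const u)
  have hfSymm := hf.isSymmSndFDerivAt (by simp)
  have hgSymm := hg.isSymmSndFDerivAt (by simp)
  rw [lieBracket, fderiv_const_add, fderiv_const_add, fderiv_hamiltonianField_apply hDf,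
    fderiv_hamiltonianField_apply hDg]
  simp only [hamiltonianField]
  have hΛ := ((((hDfu w).hasFDerivAt.fun_mul (hDgu u).hasFDerivAt).fun_sub
    ((hDgu w).hasFDerivAt.fun_mul (hDfu u).hasFDerivAt)).fun_add (hDfu b).hasFDerivAt).fun_sub
    (hDgu a).hasFDerivAt
  rw [hΛ.fderiv]
  simp only [fderiv_fderiv_apply_const hDf, fderiv_fderiv_apply_const hDg, map_add, map_sub, map_smul,
    add_apply, sub_apply, smul_apply, smul_eq_mul]
  rw [hfSymm u w, hfSymm u b, hfSymm w b, hgSymm u w, hgSymm u a, hgSymm w a]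
  module

end VectorField

open VectorField

theorem Vt_eq_const_add_hamiltonianField (n : ℕ) (y : Fin (n - 1) → (Fin (n + 1) → ℝ) → ℝ)
    (k : Fin (n - 1)) :
    Vt n y k = fun q ↦ Pi.single (xIdx k) 1 +
      hamiltonianField (Pi.single (xnIdx n) 1) (Pi.single (ynIdx n) 1) (y k) q := by
  funext q
  simp only [Vt, hamiltonianField, pd]
  abel

theorem bracket_eq_lambda_derivatives_general (n : ℕ) (U : Set (Fin (n + 1) → ℝ))
    (hU : IsOpen U) (y : Fin (n - 1) → (Fin (n + 1) → ℝ) → ℝ)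
    (hy : ∀ a, ContDiffOn ℝ (⊤ : ℕ∞) (y a) U) :
    ∀ k l : Fin (n - 1), ∀ p ∈ U,
      fderiv ℝ (Vt n y l) p (Vt n y k p) - fderiv ℝ (Vt n y k) p (Vt n y l p) =
        pd (ynIdx n) (Lam y k l) p • (Pi.single (xnIdx n) 1 : Fin (n + 1) → ℝ)
          - pd (xnIdx n) (Lam y k l) p • (Pi.single (ynIdx n) 1 : Fin (n + 1) → ℝ) := by
  intro k l p hp
  have hC2 : ∀ a, ContDiffAt ℝ 2 (y a) p := fun a ↦
    ((hy a).contDiffAt (hU.mem_nhds hp)).of_le (by norm_cast)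
  change lieBracket ℝ (Vt n y k) (Vt n y l) p = _
  rw [Vt_eq_const_add_hamiltonianField, Vt_eq_const_add_hamiltonianField,
    lieBracket_const_add_hamiltonianField (hC2 k) (hC2 l)]
  -- `Lam y k l` unfolds to the `Λ` of `lieBracket_const_add_hamiltonianField`
  exact neg_sub _ _

/-- The Lie bracket `[Ṽ_k, Ṽ_l]` equals
`(∂Λ_{k,l}/∂y_n) ∂_{x_n} - (∂Λ_{k,l}/∂x_n) ∂_{y_n}`. -/
theorem bracket_eq_lambda_derivatives (n : ℕ) (hn : 2 ≤ n) (U : Set (Fin (n + 1) → ℝ))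
    (hU : IsOpen U) (y : Fin (n - 1) → (Fin (n + 1) → ℝ) → ℝ)
    (hy : ∀ a, ContDiffOn ℝ (⊤ : ℕ∞) (y a) U) :
    ∀ k l : Fin (n - 1), ∀ p ∈ U,
      fderiv ℝ (Vt n y l) p (Vt n y k p) - fderiv ℝ (Vt n y k) p (Vt n y l p) =
        pd (ynIdx n) (Lam y k l) p • (Pi.single (xnIdx n) 1 : Fin (n + 1) → ℝ)
          - pd (xnIdx n) (Lam y k l) p • (Pi.single (ynIdx n) 1 : Fin (n + 1) → ℝ) :=
  bracket_eq_lambda_derivatives_general n U hU y hy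
end
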